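/- arXiv:2604.03811 — 2 statements merged into one kernel-verified Lean document; each statement's English description precedes it below -/
import Mathlib

section
/- Let E : [0,∞) → [0,∞) be nonincreasing and suppose there exist T > 0, C > 0, and α > 0 such that E(t)^(1+α) ≤ C·(E(t) − E(t+T)) for all t ≥ 0. Then there exists a constant C_T > 0 such that E(t) ≤ C_T·(1+t)^(−1/α) for all t ≥ 0. -/
open Real

/-! Along the samples `u n = E (n T)`, the difference inequality makes `u n ^ (-α)` grow at
least linearly: by convexity of `x ↦ x ^ (-α)`, each step adds at least `α / C`. Hence
`u n ≲ n ^ (-1/α)`, and monotonicity of `E` carries the bound from the samples to all `t`. -/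

theorem Real.one_add_mul_one_sub_le_rpow_neg {s α : ℝ} (hs : 0 < s) (hα : 0 ≤ α) :
    1 + α * (1 - s) ≤ s ^ (-α) := by
  have hlog : α * (1 - s) ≤ -α * log s := by
    nlinarith [mul_le_mul_of_nonneg_left (log_le_sub_one_of_pos hs) hα]
  calc 1 + α * (1 - s) ≤ -α * log s + 1 := by linarith
    _ ≤ exp (-α * log s) := add_one_le_exp _
    _ = s ^ (-α) := by rw [rpow_def_of_pos hs, mul_comm]

theorem Real.rpow_neg_add_div_le_rpow_neg {a b C α : ℝ} (hb : 0 < b) (hba : b ≤ a) (hC : 0 < C)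
    (hα : 0 ≤ α) (h : a ^ (1 + α) ≤ C * (a - b)) : a ^ (-α) + α / C ≤ b ^ (-α) := by
  have ha : 0 < a := hb.trans_le hba
  have hgain : 1 / C ≤ a ^ (-α) * (1 - b / a) := by
    have hrw : a ^ (-α) * (1 - b / a) = (a - b) / a ^ (1 + α) := by
      rw [rpow_add ha, rpow_one, rpow_neg ha.le]
      field_simp
    rw [hrw, div_le_div_iff₀ hC (by positivity)]
    linarith
  calc a ^ (-α) + α / C = a ^ (-α) + α * (1 / C) := by ring
    _ ≤ a ^ (-α) + α * (a ^ (-α) * (1 - b / a)) := by gcongr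
    _ = a ^ (-α) * (1 + α * (1 - b / a)) := by ring
    _ ≤ a ^ (-α) * (b / a) ^ (-α) := by
        gcongr
        exact one_add_mul_one_sub_le_rpow_neg (by positivity) hα
    _ = b ^ (-α) := by
        rw [← mul_rpow ha.le (by positivity), mul_div_cancel₀ _ ha.ne']

namespace Nakao

variable {u : ℕ → ℝ} {C α : ℝ}

theorem rpow_neg_add_nat_mul_le (hC : 0 < C) (hα : 0 ≤ α) (hu : Antitone u)
    (h : ∀ n, u n ^ (1 + α) ≤ C * (u n - u (n + 1))) :
    ∀ n : ℕ, 0 < u n → u 0 ^ (-α) + n * α / C ≤ u n ^ (-α)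
  | 0, _ => by simp
  | n + 1, hpos => by
    have hstep := rpow_neg_add_div_le_rpow_neg hpos (hu n.le_succ) hC hα (h n)
    have ih := rpow_neg_add_nat_mul_le hC hα hu h n (hpos.trans_le (hu n.le_succ))
    have hsplit : ((n : ℝ) + 1) * α / C = n * α / C + α / C := by ring
    push_cast
    linarith

theorem le_max_mul_rpow (hC : 0 < C) (hα : 0 < α) (hu : Antitone u)
    (h : ∀ n, u n ^ (1 + α) ≤ C * (u n - u (n + 1))) (n : ℕ) :
    u n ≤ max (u 0) ((C / α) ^ (1 / α)) * ((n : ℝ) + 1) ^ (-1 / α) := by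
  set K := max (u 0) ((C / α) ^ (1 / α))
  have hK : 0 < K := lt_max_of_lt_right (by positivity)
  -- `K` is chosen so that `K ^ (-α) ≤ min (u 0 ^ (-α)) (α / C)`.
  rcases le_or_gt (u n) 0 with hn | hn
  · exact hn.trans (by positivity)
  have hexp : -α * (-1 / α) = 1 := by field_simp
  have hq : -1 / α ≤ 0 := div_nonpos_of_nonpos_of_nonneg (by norm_num) hα.le
  have hu0 : 0 < u 0 := hn.trans_le (hu n.zero_le)
  have hK_u0 : K ^ (-α) ≤ u 0 ^ (-α) :=
    rpow_le_rpow_of_nonpos hu0 (le_max_left _ _) (by linarith)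
  have hK_rate : K ^ (-α) ≤ α / C := by
    calc K ^ (-α) ≤ ((C / α) ^ (1 / α)) ^ (-α) :=
          rpow_le_rpow_of_nonpos (by positivity) (le_max_right _ _) (by linarith)
      _ = α / C := by
          rw [← rpow_mul (by positivity), one_div_mul_eq_div, neg_div_self hα.ne', rpow_neg_one,
            inv_div]
  have hgrowth : ((n : ℝ) + 1) * K ^ (-α) ≤ u n ^ (-α) := by
    have hsum := rpow_neg_add_nat_mul_le hC hα.le hu h n hn
    have hlin : (n : ℝ) * K ^ (-α) ≤ n * α / C := by
      rw [mul_div_assoc]; gcongr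
    linarith
  calc u n = (u n ^ (-α)) ^ (-1 / α) := by rw [← rpow_mul hn.le, hexp, rpow_one]
    _ ≤ (((n : ℝ) + 1) * K ^ (-α)) ^ (-1 / α) :=
        rpow_le_rpow_of_nonpos (by positivity) hgrowth hq
    _ = K * ((n : ℝ) + 1) ^ (-1 / α) := by
        rw [mul_rpow (by positivity) (by positivity), ← rpow_mul hK.le, hexp, rpow_one, mul_comm]

end Nakao

theorem AntitoneOn.le_mul_rpow_of_nat_mul {E : ℝ → ℝ} {T K q : ℝ}
    (hE : AntitoneOn E (Set.Ici 0)) (hT : 0 < T) (hK : 0 ≤ K) (hq : q ≤ 0)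
    (hsample : ∀ n : ℕ, E (n * T) ≤ K * ((n : ℝ) + 1) ^ q)
    {t : ℝ} (ht : 0 ≤ t) : E t ≤ K * (1 + T) ^ (-q) * (1 + t) ^ q := by
  set n := ⌊t / T⌋₊
  have hnT : (n : ℝ) * T ≤ t := (le_div_iff₀ hT).1 (Nat.floor_le (by positivity))
  have htn : t < ((n : ℝ) + 1) * T := (div_lt_iff₀ hT).1 (Nat.lt_floor_add_one _)
  have hscale : (1 + t) / (1 + T) ≤ (n : ℝ) + 1 := by
    rw [div_le_iff₀ (by positivity)]
    nlinarith [n.cast_nonneg (α := ℝ)]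
  calc E t ≤ E (n * T) := hE (Set.mem_Ici.2 (by positivity)) ht hnT
    _ ≤ K * ((n : ℝ) + 1) ^ q := hsample n
    _ ≤ K * ((1 + t) / (1 + T)) ^ q :=
        mul_le_mul_of_nonneg_left (rpow_le_rpow_of_nonpos (by positivity) hscale hq) hK
    _ = K * (1 + T) ^ (-q) * (1 + t) ^ q := by
        rw [div_rpow (by positivity) (by positivity), rpow_neg (by positivity)]
        ring

theorem stmt3_general (E : ℝ → ℝ) (T C α : ℝ) (hT : 0 < T) (hC : 0 < C) (hα : 0 < α)
    (hE_mono : AntitoneOn E (Set.Ici 0))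
    (hineq : ∀ t, 0 ≤ t → E t ^ (1 + α) ≤ C * (E t - E (t + T))) :
    ∃ C_T > 0, ∀ t, 0 ≤ t → E t ≤ C_T * (1 + t) ^ (-1 / α) := by
  set u : ℕ → ℝ := fun n => E (n * T)
  have hu : Antitone u := fun m n hmn =>
    hE_mono (Set.mem_Ici.2 (by positivity)) (Set.mem_Ici.2 (by positivity)) (by gcongr)
  have hrec : ∀ n, u n ^ (1 + α) ≤ C * (u n - u (n + 1)) := fun n => by
    simpa [u, add_mul] using hineq (n * T) (by positivity)
  set K := max (u 0) ((C / α) ^ (1 / α))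
  have hK : 0 < K := lt_max_of_lt_right (by positivity)
  have hq : -1 / α ≤ 0 := div_nonpos_of_nonpos_of_nonneg (by norm_num) hα.le
  exact ⟨K * (1 + T) ^ (-(-1 / α)), by positivity, fun t ht =>
    hE_mono.le_mul_rpow_of_nat_mul hT hK.le hq (Nakao.le_max_mul_rpow hC hα hu hrec) ht⟩

theorem stmt3 (E : ℝ → ℝ) (T C α : ℝ) (hT : 0 < T) (hC : 0 < C) (hα : 0 < α)
    (hE_nonneg : ∀ t, 0 ≤ t → 0 ≤ E t)
    (hE_mono : AntitoneOn E (Set.Ici 0))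
    (hineq : ∀ t, 0 ≤ t → E t ^ (1 + α) ≤ C * (E t - E (t + T))) :
    ∃ C_T > 0, ∀ t, 0 ≤ t → E t ≤ C_T * (1 + t) ^ (-1 / α) :=
  stmt3_general E T C α hT hC hα hE_mono hineq
end

section
/- Let H be a real Hilbert space and A : D(A) ⊆ H → H a densely defined positive self-adjoint operator admitting square root A^(1/2), with ‖v‖ ≤ C_P·‖A^(1/2)v‖ for all v ∈ D(A^(1/2)) (Poincaré-type inequality with constant C_P). Let λ > 0 and f ∈ D(A^(1/2)), g ∈ H, and suppose u, v ∈ D(A) solve λu − v = f and λv + Au + ρ·v = g where ρ ≥ 0 is a constant. Then ‖A^(1/2)v‖ ≤ C_P·λ·‖g‖ + ‖A^(1/2)f‖ and ‖A^(1/2)u‖ ≤ (1/λ)·(C_P·λ·‖g‖ + 2‖A^(1/2)f‖). -/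
/-!
Pairing the second resolvent equation with `v` and using `λ A^(1/2) u = A^(1/2) f + A^(1/2) v`
gives the energy identity
`‖A^(1/2) v‖² + λ (λ + ρ) ‖v‖² = λ ⟨g, v⟩ - ⟨A^(1/2) f, A^(1/2) v⟩`.
Dropping the nonnegative term in `‖v‖²` and bounding `‖v‖` by Poincaré yields
`‖A^(1/2) v‖² ≤ (C_P λ ‖g‖ + ‖A^(1/2) f‖) ‖A^(1/2) v‖`, hence the bound on `A^(1/2) v`;
the bound on `A^(1/2) u` then follows from the first equation.
-/

open RealInnerProductSpace

theorem le_of_sq_le_mul_self {x a : ℝ} (h : x ^ 2 ≤ a * x) (ha : 0 ≤ a) : x ≤ a := by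
  nlinarith

namespace DampedWaveResolvent

variable {H : Type*} [NormedAddCommGroup H] [InnerProductSpace ℝ H]
  {S : H →ₗ[ℝ] H} {l ρ : ℝ} {u v f g : H}

theorem smul_apply_eq (heq1 : l • u - v = f) : l • S u = S f + S v := by
  rw [← map_smul, ← map_add, ← heq1, sub_add_cancel]

theorem norm_apply_mul_le (hl : 0 ≤ l) (heq1 : l • u - v = f) :
    l * ‖S u‖ ≤ ‖S f‖ + ‖S v‖ := by
  calc l * ‖S u‖ = ‖l • S u‖ := by rw [norm_smul, Real.norm_of_nonneg hl]
    _ = ‖S f + S v‖ := by rw [smul_apply_eq heq1]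
    _ ≤ ‖S f‖ + ‖S v‖ := norm_add_le _ _

theorem energy_identity (hS : S.IsSymmetric) (heq1 : l • u - v = f)
    (heq2 : l • v + S (S u) + ρ • v = g) :
    ‖S v‖ ^ 2 + l * (l + ρ) * ‖v‖ ^ 2 = l * ⟪g, v⟫ - ⟪S f, S v⟫ := by
  have hpair : l * ‖v‖ ^ 2 + ⟪S u, S v⟫ + ρ * ‖v‖ ^ 2 = ⟪g, v⟫ := by
    rw [← heq2, inner_add_left, inner_add_left, real_inner_smul_left, real_inner_smul_left,
      real_inner_self_eq_norm_sq, hS (S u) v]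
  have hSu : l * ⟪S u, S v⟫ = ⟪S f, S v⟫ + ‖S v‖ ^ 2 := by
    rw [← real_inner_smul_left, smul_apply_eq heq1, inner_add_left, real_inner_self_eq_norm_sq]
  linear_combination l * hpair - hSu

theorem sq_norm_apply_le (hS : S.IsSymmetric) (hl : 0 ≤ l) (hρ : 0 ≤ ρ) {C : ℝ}
    (hPoincare : ‖v‖ ≤ C * ‖S v‖) (heq1 : l • u - v = f)
    (heq2 : l • v + S (S u) + ρ • v = g) :
    ‖S v‖ ^ 2 ≤ (C * l * ‖g‖ + ‖S f‖) * ‖S v‖ := by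
  have hgv : l * ⟪g, v⟫ ≤ C * l * ‖g‖ * ‖S v‖ := by
    calc l * ⟪g, v⟫ ≤ l * (‖g‖ * ‖v‖) := mul_le_mul_of_nonneg_left (real_inner_le_norm g v) hl
      _ ≤ l * (‖g‖ * (C * ‖S v‖)) := by gcongr
      _ = C * l * ‖g‖ * ‖S v‖ := by ring
  have hfv : -⟪S f, S v⟫ ≤ ‖S f‖ * ‖S v‖ := by
    simpa only [inner_neg_left, norm_neg] using real_inner_le_norm (-S f) (S v)
  have hdamp : 0 ≤ l * (l + ρ) * ‖v‖ ^ 2 := by positivity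
  linarith [energy_identity hS heq1 heq2]

theorem norm_apply_le (hS : S.IsSymmetric) (hl : 0 ≤ l) (hρ : 0 ≤ ρ) {C : ℝ} (hC : 0 ≤ C)
    (hPoincare : ‖v‖ ≤ C * ‖S v‖) (heq1 : l • u - v = f)
    (heq2 : l • v + S (S u) + ρ • v = g) :
    ‖S v‖ ≤ C * l * ‖g‖ + ‖S f‖ :=
  le_of_sq_le_mul_self (sq_norm_apply_le hS hl hρ hPoincare heq1 heq2) (by positivity)

end DampedWaveResolvent

theorem stmt14_general {H : Type*} [NormedAddCommGroup H] [InnerProductSpace ℝ H] [CompleteSpace H]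
    (S : H →L[ℝ] H) (hS : IsSelfAdjoint S)
    (C_P : ℝ) (hCP : 0 < C_P)
    (hPoincare : ∀ w : H, ‖w‖ ≤ C_P * ‖S w‖)
    (l : ℝ) (hl : 0 < l) (ρ : ℝ) (hρ : 0 ≤ ρ)
    (u v f g : H)
    (heq1 : l • u - v = f)
    (heq2 : l • v + S (S u) + ρ • v = g) :
    ‖S v‖ ≤ C_P * l * ‖g‖ + ‖S f‖ ∧
    ‖S u‖ ≤ (1 / l) * (C_P * l * ‖g‖ + 2 * ‖S f‖) := by
  have hv : ‖S v‖ ≤ C_P * l * ‖g‖ + ‖S f‖ :=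
    DampedWaveResolvent.norm_apply_le hS.isSymmetric hl.le hρ hCP.le (hPoincare v) heq1 heq2
  have hu : l * ‖S u‖ ≤ ‖S f‖ + ‖S v‖ :=
    DampedWaveResolvent.norm_apply_mul_le hl.le heq1
  refine ⟨hv, ?_⟩
  rw [one_div_mul_eq_div, le_div_iff₀ hl]
  linarith

/-- `S` plays the role of the square root `A^(1/2)` of the positive self-adjoint
operator `A = S ∘ S`. -/
theorem stmt14 {H : Type*} [NormedAddCommGroup H] [InnerProductSpace ℝ H] [CompleteSpace H]
    (S : H →L[ℝ] H) (hS : IsSelfAdjoint S)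
    (hS_pos : ∀ w : H, 0 ≤ (inner ℝ (S w) (w) : ℝ))
    (C_P : ℝ) (hCP : 0 < C_P)
    (hPoincare : ∀ w : H, ‖w‖ ≤ C_P * ‖S w‖)
    (l : ℝ) (hl : 0 < l) (ρ : ℝ) (hρ : 0 ≤ ρ)
    (u v f g : H)
    (heq1 : l • u - v = f)
    (heq2 : l • v + S (S u) + ρ • v = g) :
    ‖S v‖ ≤ C_P * l * ‖g‖ + ‖S f‖ ∧
    ‖S u‖ ≤ (1 / l) * (C_P * l * ‖g‖ + 2 * ‖S f‖) :=
  stmt14_general S hS C_P hCP hPoincare l hl ρ hρ u v f g heq1 heq2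
end
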